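/- Let q = 2^h, h > p, k > 0, r > 1, p ≤ r ≤ m, and let R'_{2^h}(k,m) ⊆ R_{2^h}(k,m) be the set of vectors associated with the quadratic functions b' = 2^{h-1}·Σ_{α=0}^{m-k-2} x_{π(α)} x_{π(α+1)} for a single bijection π : {0,...,m-k-1} → I (i.e., taking π_0 = π_1 = ... = π_{2^k-1} = π). Then the Class II code C = ∪_{b ∈ R'_{2^h}(k,m)} { b + a : a ∈ A_{2^h}^p(k,r,m) } is contained in ZRM_{2^h}^p(r,m), and consequently for any two distinct codewords u, v ∈ C, the Hamming distance between u and v is at least 2^{m-r} and the Lee distance is at least 2^{m-r+p}. -/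

import Mathlib

open Finset

/-- The binary expansion of `i`, as a point of `ℤ₂^m`. -/
def bits (m : ℕ) (i : ℕ) : Fin m → ZMod 2 := fun j => if Nat.testBit i j.val then 1 else 0

/-- Admissibility condition on ANF coefficients for `ZRM_{2^h}^p(r,m)`. -/
def zrmCond (h p r m : ℕ) (c : Finset (Fin m) → ZMod (2 ^ h)) : Prop :=
  ∀ S : Finset (Fin m),
    (r < S.card → c S = 0) ∧
    (r - p < S.card → S.card ≤ r →
      ∃ u : ZMod (2 ^ h), c S = 2 ^ (S.card - (r - p)) * u)

/-- The vector of length `2^m` associated with ANF coefficients `c`. -/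
def anfVec (h m : ℕ) (c : Finset (Fin m) → ZMod (2 ^ h)) : Fin (2 ^ m) → ZMod (2 ^ h) :=
  fun i => ∑ S : Finset (Fin m), c S * ∏ α ∈ S, ((bits m i.val α).val : ZMod (2 ^ h))

/-- The code `ZRM_{2^h}^p(r,m)`. -/
def ZRM (h p r m : ℕ) : Set (Fin (2 ^ m) → ZMod (2 ^ h)) :=
  {v | ∃ c : Finset (Fin m) → ZMod (2 ^ h), zrmCond h p r m c ∧ v = anfVec h m c}

/-- The linear code `L_{2^h}(k,m)`. -/
def LCode (h m k : ℕ) (iI : ℕ → Fin m) (jJ : Fin k → Fin m) :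
    Set (Fin (2 ^ m) → ZMod (2 ^ h)) :=
  {v | ∃ (g : ℕ → (Fin k → ZMod 2) → ZMod (2 ^ h)) (g' : (Fin k → ZMod 2) → ZMod (2 ^ h)),
    v = fun i =>
      (∑ α ∈ Finset.range (m - k),
          ((bits m i.val (iI α)).val : ZMod (2 ^ h)) * g α (fun b => bits m i.val (jJ b)))
        + g' (fun b => bits m i.val (jJ b))}

/-- The set `R'_{2^h}(k,m)` of vectors associated with the quadratic forms
`2^{h-1}·∑_α x_{π(α)}x_{π(α+1)}` for a single bijection `π` of `{0,…,m-k-1}` onto `I`. -/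
def RCode' (h m k : ℕ) (iI : ℕ → Fin m) : Set (Fin (2 ^ m) → ZMod (2 ^ h)) :=
  {v | ∃ π : ℕ → Fin m, Set.InjOn π (Set.Iio (m - k)) ∧
    π '' Set.Iio (m - k) = iI '' Set.Iio (m - k) ∧
    v = fun i => ((2 ^ (h - 1) *
      ∑ α ∈ Finset.range (m - k - 1),
        (bits m i.val (π α)).val * (bits m i.val (π (α + 1))).val : ℕ) : ZMod (2 ^ h))}

/-- Hamming distance. -/
def distH {n q : ℕ} (u v : Fin n → ZMod q) : ℕ := (Finset.univ.filter fun i => u i ≠ v i).card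

/-- Lee weight. -/
def wtL {n q : ℕ} (v : Fin n → ZMod q) : ℕ := ∑ i : Fin n, min (v i).val (q - (v i).val)

/-!
Each `b ∈ R'_{2^h}(k,m)` is a sum of the monomials `2^{h-1} x_a x_b`, which lie in
`ZRM_{2^h}^p(r,m)` because `p < h` and `2 ≤ r`; since `ZRM` is an additive group, the Class II
code lies in it and the difference of two distinct codewords is a nonzero word of `ZRM`.

For a nonzero `w = ∑ c_S x^S ∈ ZRM`, let `2^t` be the largest power of two dividing every `c_S`.
Dividing by `2^t` and reducing mod 2 gives a nonzero Boolean function of degree at most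
`d = min(r, r - p + t)`, so it is nonzero at `2^{m-d}` points or more; at each of them `w` is
`2^t` times an odd number, whose Lee weight is at least `2^t`. Both bounds follow from
`m - d ≥ m - r` and `m - d + t ≥ m - r + p`.

The Boolean bound is the Reed–Muller one: if `x^S` is a maximal monomial of `f`, the sum of `f`
over any translate of the subcube on the coordinates in `S` is the coefficient of `x^S`, so each
of the `2^{n-|S|}` translates contains a point where `f ≠ 0`.
-/

section BooleanAnf

variable {σ : Type*} [Fintype σ] [DecidableEq σ]

def subcube (S : Finset σ) (z : σ → ZMod 2) : Finset (σ → ZMod 2) :=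
  Fintype.piFinset fun j => if j ∈ S then univ else {z j}

lemma mem_subcube {S : Finset σ} {z x : σ → ZMod 2} :
    x ∈ subcube S z ↔ ∀ j ∉ S, x j = z j := by
  simp only [subcube, Fintype.mem_piFinset]
  refine forall_congr' fun j => ?_
  by_cases hj : j ∈ S <;> simp [hj]

lemma sum_subcube_prod (S T : Finset σ) (z : σ → ZMod 2) :
    ∑ x ∈ subcube S z, ∏ j ∈ T, x j = if S ⊆ T then ∏ j ∈ T \ S, z j else 0 := by
  have hfactor : ∀ j, ∑ b ∈ (if j ∈ S then univ else {z j}), (if j ∈ T then b else 1) =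
      if j ∈ S then (if j ∈ T then 1 else 0) else (if j ∈ T then z j else 1) := by
    intro j
    by_cases hS : j ∈ S <;> by_cases hT : j ∈ T <;> simp [hS, hT] <;> decide
  have hprod : ∀ x : σ → ZMod 2, ∏ j ∈ T, x j = ∏ j, if j ∈ T then x j else 1 := fun _ =>
    by rw [prod_ite_mem, univ_inter]
  have hdiff : univ.filter (· ∉ S) ∩ T = T \ S := by ext; simp [and_comm]
  simp only [subcube, hprod]
  rw [← prod_univ_sum (fun j => if j ∈ S then univ else {z j})
    (fun j b => if j ∈ T then b else 1)]
  simp only [hfactor]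
  rw [prod_ite, prod_boole, prod_ite_mem, hdiff]
  simp [subset_iff]

def boolAnfEval (c : Finset σ → ZMod 2) (x : σ → ZMod 2) : ZMod 2 :=
  ∑ T : Finset σ, c T * ∏ j ∈ T, x j

lemma sum_subcube_boolAnfEval {c : Finset σ → ZMod 2} {S : Finset σ}
    (hmax : ∀ T, c T ≠ 0 → S ⊆ T → T = S) (z : σ → ZMod 2) :
    ∑ x ∈ subcube S z, boolAnfEval c x = c S := by
  simp only [boolAnfEval]
  rw [sum_comm]
  simp only [← mul_sum, sum_subcube_prod]
  rw [sum_eq_single S (fun T _ hTS => ?_) (by simp)]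
  · simp
  · by_cases hT : c T = 0
    · rw [hT, zero_mul]
    · rw [if_neg fun hST => hTS (hmax T hT hST), mul_zero]

theorem two_pow_le_card_boolAnfEval_ne_zero {c : Finset σ → ZMod 2} {d : ℕ}
    (hdeg : ∀ T : Finset σ, d < T.card → c T = 0) (hc : c ≠ 0) :
    2 ^ (Fintype.card σ - d) ≤ #{x | boolAnfEval c x ≠ 0} := by
  obtain ⟨S, hS, hSmax⟩ := exists_max_image {T | c T ≠ 0} card
    (by simpa [Finset.Nonempty, funext_iff] using hc)
  rw [mem_filter_univ] at hS
  have hmax : ∀ T, c T ≠ 0 → S ⊆ T → T = S := fun T hT hST =>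
    (eq_of_subset_of_card_le hST (hSmax T (mem_filter_univ _ |>.2 hT))).symm
  have hsurj : Set.SurjOn (fun x (j : {j // j ∉ S}) => x j)
      (({x | boolAnfEval c x ≠ 0} : Finset (σ → ZMod 2)) : Set (σ → ZMod 2))
      (univ : Finset ({j // j ∉ S} → ZMod 2)) := by
    intro y _
    let z : σ → ZMod 2 := fun j => if hj : j ∈ S then 0 else y ⟨j, hj⟩
    obtain ⟨x, hx, hne⟩ := exists_ne_zero_of_sum_ne_zero
      ((sum_subcube_boolAnfEval hmax z).symm ▸ hS)
    refine ⟨x, by simpa using hne, funext fun j => ?_⟩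
    simp [mem_subcube.1 hx j j.2, z, j.2]
  have hSd : S.card ≤ d := by
    by_contra! hlt
    exact hS (hdeg S hlt)
  calc 2 ^ (Fintype.card σ - d) ≤ 2 ^ (Fintype.card σ - S.card) :=
        Nat.pow_le_pow_right two_pos (by omega)
    _ = #(univ : Finset ({j // j ∉ S} → ZMod 2)) := by
        simp [Fintype.card_subtype_compl, Fintype.card_coe]
    _ ≤ _ := card_le_card_of_surjOn _ hsurj

end BooleanAnf

-- `ZMod 2` is `Fin 2` by definition, so `bits m` is the base-2 digit map of Mathlib.
lemma bits_eq_finFunctionFinEquiv_symm (m : ℕ) (i : Fin (2 ^ m)) :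
    bits m i.val = finFunctionFinEquiv.symm i := by
  funext j
  apply Fin.ext
  rw [finFunctionFinEquiv_symm_apply_val, bits, Nat.testBit_eq_decide_div_mod_eq]
  rcases Nat.mod_two_eq_zero_or_one (i.val / 2 ^ j.val) with hb | hb <;> simp [hb] <;> rfl

lemma bits_bijective (m : ℕ) : Function.Bijective fun i : Fin (2 ^ m) => bits m i.val := by
  have : (fun i : Fin (2 ^ m) => bits m i.val) = finFunctionFinEquiv.symm :=
    funext (bits_eq_finFunctionFinEquiv_symm m)
  rw [this]
  exact finFunctionFinEquiv.symm.bijective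

section ZRMSubgroup

variable {h p r m : ℕ}

lemma anfVec_zero : anfVec h m 0 = 0 := by
  funext i
  simp [anfVec]

lemma anfVec_add (c₁ c₂ : Finset (Fin m) → ZMod (2 ^ h)) :
    anfVec h m (c₁ + c₂) = anfVec h m c₁ + anfVec h m c₂ := by
  funext i
  simp [anfVec, add_mul, sum_add_distrib]

lemma anfVec_neg (c : Finset (Fin m) → ZMod (2 ^ h)) : anfVec h m (-c) = -anfVec h m c := by
  funext i
  simp [anfVec]

lemma zrmCond_add {c₁ c₂ : Finset (Fin m) → ZMod (2 ^ h)} (h₁ : zrmCond h p r m c₁)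
    (h₂ : zrmCond h p r m c₂) : zrmCond h p r m (c₁ + c₂) := fun S =>
  ⟨fun hS => by simp [(h₁ S).1 hS, (h₂ S).1 hS], fun hl hu => by
    obtain ⟨u₁, hu₁⟩ := (h₁ S).2 hl hu
    obtain ⟨u₂, hu₂⟩ := (h₂ S).2 hl hu
    exact ⟨u₁ + u₂, by simp [hu₁, hu₂, mul_add]⟩⟩

lemma zrmCond_neg {c : Finset (Fin m) → ZMod (2 ^ h)} (hc : zrmCond h p r m c) :
    zrmCond h p r m (-c) := fun S =>
  ⟨fun hS => by simp [(hc S).1 hS], fun hl hu => by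
    obtain ⟨u, hu⟩ := (hc S).2 hl hu
    exact ⟨-u, by simp [hu]⟩⟩

variable (h p r m) in
def zrmAddSubgroup : AddSubgroup (Fin (2 ^ m) → ZMod (2 ^ h)) where
  carrier := ZRM h p r m
  zero_mem' := ⟨0, fun _ => ⟨fun _ => rfl, fun _ _ => ⟨0, by simp⟩⟩, anfVec_zero.symm⟩
  add_mem' := by
    rintro _ _ ⟨c₁, h₁, rfl⟩ ⟨c₂, h₂, rfl⟩
    exact ⟨c₁ + c₂, zrmCond_add h₁ h₂, (anfVec_add c₁ c₂).symm⟩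
  neg_mem' := by
    rintro _ ⟨c, hc, rfl⟩
    exact ⟨-c, zrmCond_neg hc, (anfVec_neg c).symm⟩

lemma monomial_mem_ZRM {S : Finset (Fin m)} (hS : S.card ≤ r) (u : ZMod (2 ^ h)) :
    (fun i : Fin (2 ^ m) => 2 ^ (S.card - (r - p)) * u *
      ∏ α ∈ S, ((bits m i.val α).val : ZMod (2 ^ h))) ∈ ZRM h p r m := by
  refine ⟨Pi.single S (2 ^ (S.card - (r - p)) * u), fun T => ?_, ?_⟩
  · by_cases hT : T = S
    · subst hT
      exact ⟨fun hlt => absurd hlt (not_lt.2 hS), fun _ _ => ⟨u, by simp⟩⟩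
    · exact ⟨fun _ => by simp [hT], fun _ _ => ⟨0, by simp [hT]⟩⟩
  · funext i
    simp [anfVec, Pi.single_apply]

end ZRMSubgroup

lemma RCode'_subset_ZRM {h p r m k : ℕ} (hph : p < h) (hr : 1 < r) (iI : ℕ → Fin m) :
    RCode' h m k iI ⊆ ZRM h p r m := by
  rintro _ ⟨π, hπ, -, rfl⟩
  have hne : ∀ α ∈ range (m - k - 1), π α ≠ π (α + 1) := fun α hα he => by
    rw [mem_range] at hα
    have := hπ (by simp only [Set.mem_Iio]; omega) (by simp only [Set.mem_Iio]; omega) he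
    omega
  have hsum : (fun i : Fin (2 ^ m) => ((2 ^ (h - 1) * ∑ α ∈ range (m - k - 1),
      (bits m i.val (π α)).val * (bits m i.val (π (α + 1))).val : ℕ) : ZMod (2 ^ h))) =
      ∑ α ∈ range (m - k - 1), fun i => 2 ^ (h - 1) *
        ∏ β ∈ {π α, π (α + 1)}, ((bits m i.val β).val : ZMod (2 ^ h)) := by
    funext i
    push_cast
    simp only [Finset.sum_apply, mul_sum]
    exact sum_congr rfl fun α hα => by rw [prod_pair (hne α hα)]
  have hcoef :
      (2 : ZMod (2 ^ h)) ^ (h - 1) = 2 ^ (2 - (r - p)) * 2 ^ (h - 1 - (2 - (r - p))) := by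
    rw [← pow_add]; congr 1; omega
  rw [hsum]
  refine (zrmAddSubgroup h p r m).sum_mem fun α hα => ?_
  have hcard := card_pair (hne α hα)
  have := monomial_mem_ZRM (h := h) (p := p) (hcard.trans_le hr) (2 ^ (h - 1 - (2 - (r - p))))
  rwa [hcard, ← hcoef] at this

section TwoAdic

variable {h : ℕ}

lemma exists_two_pow_dvd_val {ι : Type*} (c : ι → ZMod (2 ^ h)) (hc : c ≠ 0) :
    ∃ t < h, (∀ S, 2 ^ t ∣ (c S).val) ∧ ∃ S, ¬ 2 ^ (t + 1) ∣ (c S).val := by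
  classical
  obtain ⟨S₀, hS₀⟩ := Function.ne_iff.1 hc
  have hval : 0 < (c S₀).val := Nat.pos_of_ne_zero ((ZMod.val_ne_zero _).2 hS₀)
  have hex : ∃ t, ∃ S, ¬ 2 ^ (t + 1) ∣ (c S).val := ⟨h, S₀, fun hd =>
    absurd (Nat.le_of_dvd hval hd) (not_le.2 ((ZMod.val_lt _).trans
      (Nat.pow_lt_pow_right one_lt_two h.lt_succ_self)))⟩
  have hdvd : ∀ S, 2 ^ Nat.find hex ∣ (c S).val := by
    intro S
    cases hfind : Nat.find hex with
    | zero => exact one_dvd _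
    | succ s =>
      exact not_not.1 (not_exists.1
        (Nat.find_min hex (hfind.symm ▸ s.lt_succ_self : s < Nat.find hex)) S)
  refine ⟨Nat.find hex, ?_, hdvd, Nat.find_spec hex⟩
  exact (Nat.pow_lt_pow_iff_right one_lt_two).1
    ((Nat.le_of_dvd hval (hdvd S₀)).trans_lt (ZMod.val_lt _))

lemma two_pow_dvd_val_of_eq_two_pow_mul {x u : ZMod (2 ^ h)} {e s : ℕ} (hx : x = 2 ^ e * u)
    (hse : s ≤ e) (hsh : s ≤ h) : 2 ^ s ∣ x.val := by
  have : x = ((2 ^ e * u.val : ℕ) : ZMod (2 ^ h)) := by simp [hx]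
  rw [this, ZMod.val_natCast, Nat.dvd_mod_iff (pow_dvd_pow 2 hsh)]
  exact (pow_dvd_pow 2 hse).mul_right _

lemma two_pow_le_min_val_of_odd {t M : ℕ} (ht : t < h) (hM : Odd M) :
    2 ^ t ≤ min ((2 ^ t * M : ℕ) : ZMod (2 ^ h)).val
      (2 ^ h - ((2 ^ t * M : ℕ) : ZMod (2 ^ h)).val) := by
  have hsplit : 2 ^ h = 2 ^ t * 2 ^ (h - t) := by rw [← pow_add, Nat.add_sub_cancel' ht.le]
  rw [ZMod.val_natCast, hsplit, Nat.mul_mod_mul_left, ← Nat.mul_sub]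
  have hne : M % 2 ^ (h - t) ≠ 0 := fun h0 => Nat.not_even_iff_odd.2 hM <|
    even_iff_two_dvd.2 ((dvd_pow_self 2 (by omega)).trans (Nat.dvd_of_mod_eq_zero h0))
  have hlt : M % 2 ^ (h - t) < 2 ^ (h - t) := Nat.mod_lt _ (by positivity)
  exact le_min (Nat.le_mul_of_pos_right _ (by omega)) (Nat.le_mul_of_pos_right _ (by omega))

end TwoAdic

section Reduction

variable {h m : ℕ}

def anfReduce (t : ℕ) (c : Finset (Fin m) → ZMod (2 ^ h)) : Finset (Fin m) → ZMod 2 :=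
  fun S => ((c S).val / 2 ^ t : ℕ)

lemma anfReduce_eq_zero_iff {t : ℕ} {c : Finset (Fin m) → ZMod (2 ^ h)} {S : Finset (Fin m)}
    (hdvd : 2 ^ t ∣ (c S).val) : anfReduce t c S = 0 ↔ 2 ^ (t + 1) ∣ (c S).val := by
  obtain ⟨q, hq⟩ := hdvd
  rw [anfReduce, hq, Nat.mul_div_cancel_left _ (by positivity), pow_succ,
    Nat.mul_dvd_mul_iff_left (by positivity), ZMod.natCast_eq_zero_iff]

lemma anfVec_apply_eq_two_pow_mul {t : ℕ} {c : Finset (Fin m) → ZMod (2 ^ h)}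
    (hdvd : ∀ S, 2 ^ t ∣ (c S).val) (i : Fin (2 ^ m)) :
    ∃ M : ℕ, anfVec h m c i = ((2 ^ t * M : ℕ) : ZMod (2 ^ h)) ∧
      (M : ZMod 2) = boolAnfEval (anfReduce t c) (bits m i.val) := by
  refine ⟨∑ S, (c S).val / 2 ^ t * ∏ α ∈ S, (bits m i.val α).val, ?_, ?_⟩
  · simp only [anfVec, mul_sum, ← mul_assoc, Nat.mul_div_cancel' (hdvd _)]
    push_cast
    simp
  · simp [boolAnfEval, anfReduce]

lemma two_pow_dvd_val_of_zrmCond {p r t : ℕ} {c : Finset (Fin m) → ZMod (2 ^ h)}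
    (hc : zrmCond h p r m c) (ht : t < h) {T : Finset (Fin m)} (hT : min r (r - p + t) < T.card) :
    2 ^ (t + 1) ∣ (c T).val := by
  by_cases hrT : r < T.card
  · simp [(hc T).1 hrT]
  · obtain ⟨u, hu⟩ := (hc T).2 (by omega) (by omega)
    exact two_pow_dvd_val_of_eq_two_pow_mul hu (by omega) ht

end Reduction

theorem ZRM_weight_bounds {h p r m : ℕ} (hpr : p ≤ r) (hrm : r ≤ m)
    {w : Fin (2 ^ m) → ZMod (2 ^ h)} (hw : w ∈ ZRM h p r m) (hne : w ≠ 0) :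
    2 ^ (m - r) ≤ #{i | w i ≠ 0} ∧ 2 ^ (m - r + p) ≤ wtL w := by
  obtain ⟨c, hc, rfl⟩ := hw
  obtain ⟨t, ht, hdvd, S₀, hS₀⟩ :=
    exists_two_pow_dvd_val c (by rintro rfl; exact hne anfVec_zero)
  set d := min r (r - p + t)
  set N := #{i : Fin (2 ^ m) | boolAnfEval (anfReduce t c) (bits m i.val) ≠ 0}
  have hN : 2 ^ (m - d) ≤ N := by
    have hdeg : ∀ T : Finset (Fin m), d < T.card → anfReduce t c T = 0 := fun T hT =>
      (anfReduce_eq_zero_iff (hdvd T)).2 (two_pow_dvd_val_of_zrmCond hc ht hT)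
    have hred : anfReduce t c ≠ 0 :=
      Function.ne_iff.2 ⟨S₀, (anfReduce_eq_zero_iff (hdvd S₀)).not.2 hS₀⟩
    have := two_pow_le_card_boolAnfEval_ne_zero hdeg hred
    rw [Fintype.card_fin] at this
    exact this.trans_eq (card_equiv (Equiv.ofBijective _ (bits_bijective m)) (by simp)).symm
  have hlee : ∀ i ∈ ({i | boolAnfEval (anfReduce t c) (bits m i.val) ≠ 0} :
      Finset (Fin (2 ^ m))),
      2 ^ t ≤ min (anfVec h m c i).val (2 ^ h - (anfVec h m c i).val) := by
    intro i hi
    obtain ⟨M, hM, hMred⟩ := anfVec_apply_eq_two_pow_mul hdvd i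
    rw [hM]
    exact two_pow_le_min_val_of_odd ht
      (ZMod.natCast_ne_zero_iff_odd.1 (hMred ▸ (mem_filter_univ i).1 hi))
  constructor
  · calc 2 ^ (m - r) ≤ 2 ^ (m - d) := Nat.pow_le_pow_right two_pos (by omega)
      _ ≤ N := hN
      _ ≤ _ := card_le_card fun i hi => by
        rw [mem_filter_univ]
        intro h0
        simpa [h0] using (hlee i hi).trans (min_le_left _ _)
  · calc 2 ^ (m - r + p) ≤ 2 ^ (m - d) * 2 ^ t := by
          rw [← pow_add]; exact Nat.pow_le_pow_right two_pos (by omega)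
      _ ≤ N * 2 ^ t := Nat.mul_le_mul_right _ hN
      _ ≤ wtL (anfVec h m c) := by
        rw [← smul_eq_mul]
        exact (card_nsmul_le_sum _ _ _ hlee).trans (sum_le_sum_of_subset (subset_univ _))

theorem stmt_15_general (h p r m k : ℕ) (hph : p < h) (hr : 1 < r) (hpr : p ≤ r)
    (hrm : r ≤ m)
    (iI : ℕ → Fin m) (jJ : Fin k → Fin m) :
    (∀ w, (∃ b ∈ RCode' h m k iI, ∃ a ∈ LCode h m k iI jJ ∩ ZRM h p r m, w = b + a) →
      w ∈ ZRM h p r m) ∧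
    (∀ u v : Fin (2 ^ m) → ZMod (2 ^ h),
      (∃ b ∈ RCode' h m k iI, ∃ a ∈ LCode h m k iI jJ ∩ ZRM h p r m, u = b + a) →
      (∃ b ∈ RCode' h m k iI, ∃ a ∈ LCode h m k iI jJ ∩ ZRM h p r m, v = b + a) →
      u ≠ v →
      2 ^ (m - r) ≤ distH u v ∧ 2 ^ (m - r + p) ≤ wtL (u - v)) := by
  have hmem : ∀ w,
      (∃ b ∈ RCode' h m k iI, ∃ a ∈ LCode h m k iI jJ ∩ ZRM h p r m, w = b + a) →
      w ∈ ZRM h p r m := by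
    rintro _ ⟨b, hb, a, ⟨-, ha⟩, rfl⟩
    exact (zrmAddSubgroup h p r m).add_mem (RCode'_subset_ZRM hph hr iI hb) ha
  refine ⟨hmem, fun u v hu hv huv => ?_⟩
  have hsub : u - v ∈ ZRM h p r m := (zrmAddSubgroup h p r m).sub_mem (hmem u hu) (hmem v hv)
  obtain ⟨hH, hL⟩ := ZRM_weight_bounds hpr hrm hsub (sub_ne_zero.2 huv)
  refine ⟨?_, hL⟩
  simpa [distH, sub_ne_zero] using hH

/-- Class II codes (`k > 0`, `r > 1`): the union of the cosets `b + A_{2^h}^p(k,r,m)` over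
`b ∈ R'_{2^h}(k,m)` is contained in `ZRM_{2^h}^p(r,m)`, hence has minimum Hamming distance at
least `2^{m-r}` and minimum Lee distance at least `2^{m-r+p}`. -/
theorem stmt_15 (h p r m k : ℕ) (hph : p < h) (hk : 0 < k) (hr : 1 < r) (hpr : p ≤ r)
    (hrm : r ≤ m) (hkm : k ≤ m)
    (iI : ℕ → Fin m) (jJ : Fin k → Fin m)
    (hiInj : Set.InjOn iI (Set.Iio (m - k))) (hjInj : Function.Injective jJ)
    (hdisj : ∀ a < m - k, ∀ b : Fin k, iI a ≠ jJ b)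
    (hcover : ∀ v : Fin m, (∃ a < m - k, iI a = v) ∨ ∃ b : Fin k, jJ b = v) :
    (∀ w, (∃ b ∈ RCode' h m k iI, ∃ a ∈ LCode h m k iI jJ ∩ ZRM h p r m, w = b + a) →
      w ∈ ZRM h p r m) ∧
    (∀ u v : Fin (2 ^ m) → ZMod (2 ^ h),
      (∃ b ∈ RCode' h m k iI, ∃ a ∈ LCode h m k iI jJ ∩ ZRM h p r m, u = b + a) →
      (∃ b ∈ RCode' h m k iI, ∃ a ∈ LCode h m k iI jJ ∩ ZRM h p r m, v = b + a) →
      u ≠ v →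
      2 ^ (m - r) ≤ distH u v ∧ 2 ^ (m - r + p) ≤ wtL (u - v)) :=
  stmt_15_general h p r m k hph hr hpr hrm iI jJ
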